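/- arXiv:2505.13206 — 7 statements merged into one kernel-verified Lean document; each statement's English description precedes it below -/
import Mathlib

section
/- Let G be the mGG CRM total mass with α = 1, τ = 0, parameters β > 0, c > 0, η > 0. Then E[G] = η c (1 − β + β log β)/(β log² β) for β ≠ 1 and E[G] = ηc/2 for β = 1. -/
open Real MeasureTheory intervalIntegral

/-- Lévy intensity ρ_mSt(w; 1, 0) of the mixed stable CRM with α = 1, τ = 0. -/
noncomputable def rhoMSt10 (w : ℝ) : ℝ :=
  ∫ s in (0:ℝ)..1, (s / Real.Gamma (1 - s)) * w ^ (-1 - s)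

/-- Lévy intensity ρ_mGG(w; 1, 0, β, c, η) of the mGG CRM. -/
noncomputable def rhoMGG10 (β c η w : ℝ) : ℝ :=
  (η / c) * rhoMSt10 (w / c) * Real.exp (-β * w / c)

/-!
By Tonelli, `∫ w ρ_mGG(w) dw` is `(η/c) ∫₀¹ s/Γ(1-s) ∫₀^∞ w (w/c)^(-1-s) e^(-βw/c) dw ds`. The inner
integral is a Gamma integral, `c² Γ(1-s) β^(s-1)`, whose `Γ(1-s)` cancels the one in the intensity;
this leaves `η c ∫₀¹ s β^(s-1) ds`, which is elementary: an antiderivative of `s β^(s-1)` is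
`β^(s-1) (s log β - 1) / log² β`, and for `β = 1` the integrand is just `s`.
-/
open Set

theorem integral_integral_swap_of_nonneg {α β : Type*} [MeasurableSpace α] [MeasurableSpace β]
    {μ : Measure α} {ν : Measure β} [SFinite μ] [SFinite ν] {f : α → β → ℝ}
    (hf : AEStronglyMeasurable (Function.uncurry f) (μ.prod ν))
    (hf_nonneg : ∀ᵐ y ∂ν, ∀ᵐ x ∂μ, 0 ≤ f x y)
    (hf_sec : ∀ᵐ y ∂ν, Integrable (f · y) μ)
    (hf_int : Integrable (fun y => ∫ x, f x y ∂μ) ν) :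
    ∫ x, ∫ y, f x y ∂ν ∂μ = ∫ y, ∫ x, f x y ∂μ ∂ν := by
  refine integral_integral_swap ((integrable_prod_iff' hf).2 ⟨hf_sec, hf_int.congr ?_⟩)
  filter_upwards [hf_nonneg] with y hy
  exact integral_congr_ae (hy.mono fun x hx => (norm_of_nonneg hx).symm)

section GammaIntegral

variable {β c s : ℝ}

lemma mul_div_rpow_mul_exp_eq (hc : 0 < c) {w : ℝ} (hw : 0 < w) :
    w * (w / c) ^ (-1 - s) * exp (-β * w / c) =
      c ^ (1 + s) * (w ^ ((1 - s) - 1) * exp (-(β / c * w))) := by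
  rw [show -1 - s = -(1 + s) by ring, div_rpow hw.le hc.le, rpow_neg hc.le,
    show (1 - s) - 1 = 1 + -(1 + s) by ring, rpow_add hw, rpow_one, rpow_neg hw.le]
  field_simp

lemma integrableOn_mul_div_rpow_mul_exp (hβ : 0 < β) (hc : 0 < c) (hs : s < 1) :
    IntegrableOn (fun w => w * (w / c) ^ (-1 - s) * exp (-β * w / c)) (Ioi 0) := by
  refine IntegrableOn.congr_fun ((integrableOn_rpow_mul_exp_neg_mul_rpow
    (by linarith : -1 < (1 - s) - 1) one_pos (div_pos hβ hc)).const_mul (c ^ (1 + s)))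
    (fun w hw => ?_) measurableSet_Ioi
  rw [mul_div_rpow_mul_exp_eq hc hw, rpow_one, neg_mul]

lemma integral_mul_div_rpow_mul_exp (hβ : 0 < β) (hc : 0 < c) (hs : s < 1) :
    ∫ w in Ioi 0, w * (w / c) ^ (-1 - s) * exp (-β * w / c) =
      c ^ 2 * Gamma (1 - s) * β ^ (s - 1) := by
  have hc2 : c ^ (1 + s) * c ^ (1 - s) = c ^ 2 := by
    rw [← rpow_add hc, ← rpow_natCast]; norm_num
  have hβs : β ^ (1 - s) * β ^ (s - 1) = 1 := by
    rw [← rpow_add hβ]; norm_num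
  rw [setIntegral_congr_fun measurableSet_Ioi fun w hw => mul_div_rpow_mul_exp_eq hc hw,
    MeasureTheory.integral_const_mul,
    integral_rpow_mul_exp_neg_mul_Ioi (by linarith) (div_pos hβ hc), one_div_div,
    div_rpow hc.le hβ.le, ← hc2]
  field_simp
  linear_combination -Gamma (1 - s) * hβs

end GammaIntegral

noncomputable def firstMomentKernel (β c w s : ℝ) : ℝ :=
  s / Gamma (1 - s) * (w * (w / c) ^ (-1 - s) * exp (-β * w / c))

section FirstMomentKernel

variable {β c : ℝ}

lemma mul_rhoMGG10_eq_integral_firstMomentKernel (η w : ℝ) :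
    w * rhoMGG10 β c η w = η / c * ∫ s in Ioo 0 1, firstMomentKernel β c w s := by
  have hK (s : ℝ) : firstMomentKernel β c w s =
      s / Gamma (1 - s) * (w / c) ^ (-1 - s) * (w * exp (-β * w / c)) := by
    rw [firstMomentKernel]; ring
  simp only [hK, MeasureTheory.integral_mul_const, rhoMGG10, rhoMSt10,
    intervalIntegral.integral_of_le zero_le_one, integral_Ioc_eq_integral_Ioo]
  ring

lemma integral_firstMomentKernel (hβ : 0 < β) (hc : 0 < c) {s : ℝ} (hs : s < 1) :
    ∫ w in Ioi 0, firstMomentKernel β c w s = c ^ 2 * (s * β ^ (s - 1)) := by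
  have hΓ : Gamma (1 - s) ≠ 0 := (Gamma_pos_of_pos (by linarith)).ne'
  unfold firstMomentKernel
  rw [MeasureTheory.integral_const_mul,
    integral_mul_div_rpow_mul_exp hβ hc hs]
  field_simp

lemma firstMomentKernel_nonneg (hc : 0 < c) {w s : ℝ} (hw : 0 < w) (hs : s ∈ Ioo 0 1) :
    0 ≤ firstMomentKernel β c w s := by
  have hΓ : 0 < Gamma (1 - s) := Gamma_pos_of_pos (by linarith [hs.2])
  have := hs.1
  unfold firstMomentKernel
  positivity

lemma continuousOn_firstMomentKernel (hc : 0 < c) :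
    ContinuousOn (fun p : ℝ × ℝ => firstMomentKernel β c p.1 p.2) (Ioi 0 ×ˢ Iio 1) := by
  rintro ⟨w, s⟩ ⟨hw, hs⟩
  have hs' : 0 < 1 - s := sub_pos.2 hs
  have hΓ : ContinuousAt (fun p : ℝ × ℝ => Gamma (1 - p.2)) (w, s) :=
    (differentiableAt_Gamma fun m => by linarith [(m.cast_nonneg : (0 : ℝ) ≤ m)]).continuousAt.comp
      (f := fun p : ℝ × ℝ => 1 - p.2) (by fun_prop)
  refine ContinuousAt.continuousWithinAt ?_
  unfold firstMomentKernel
  refine (continuous_snd.continuousAt.div hΓ (Gamma_pos_of_pos hs').ne').mul ?_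
  refine (continuous_fst.continuousAt.mul ?_).mul (by fun_prop)
  exact (continuous_fst.div_const c).continuousAt.rpow (by fun_prop)
    (Or.inl (div_pos hw hc).ne')

end FirstMomentKernel

theorem integral_mul_rhoMGG10 {β c : ℝ} (hβ : 0 < β) (hc : 0 < c) (η : ℝ) :
    ∫ w in Ioi 0, w * rhoMGG10 β c η w = η * c * ∫ s in (0 : ℝ)..1, s * β ^ (s - 1) := by
  have hcont : Continuous fun s : ℝ => c ^ 2 * (s * β ^ (s - 1)) := by
    fun_prop (disch := exact hβ.ne')
  have hswap : ∫ w in Ioi 0, ∫ s in Ioo 0 1, firstMomentKernel β c w s =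
      ∫ s in Ioo 0 1, ∫ w in Ioi 0, firstMomentKernel β c w s := by
    refine integral_integral_swap_of_nonneg ?_ ?_ ?_ ?_
    · rw [Measure.prod_restrict]
      exact ((continuousOn_firstMomentKernel hc).mono
        (prod_mono subset_rfl Ioo_subset_Iio_self)).aestronglyMeasurable
          (measurableSet_Ioi.prod measurableSet_Ioo)
    · filter_upwards [ae_restrict_mem measurableSet_Ioo] with s hs
      filter_upwards [ae_restrict_mem measurableSet_Ioi] with w hw
      exact firstMomentKernel_nonneg hc hw hs
    · filter_upwards [ae_restrict_mem measurableSet_Ioo] with s hs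
      exact (integrableOn_mul_div_rpow_mul_exp hβ hc hs.2).const_mul _
    · exact (hcont.integrableOn_Icc.mono_set Ioo_subset_Icc_self).congr_fun
        (fun s hs => (integral_firstMomentKernel hβ hc hs.2).symm) measurableSet_Ioo
  calc ∫ w in Ioi 0, w * rhoMGG10 β c η w
      = η / c * ∫ s in Ioo 0 1, ∫ w in Ioi 0, firstMomentKernel β c w s := by
        simp only [mul_rhoMGG10_eq_integral_firstMomentKernel, MeasureTheory.integral_const_mul,
          hswap]
    _ = η / c * ∫ s in Ioo 0 1, c ^ 2 * (s * β ^ (s - 1)) := by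
        rw [setIntegral_congr_fun measurableSet_Ioo
          fun s hs => integral_firstMomentKernel hβ hc hs.2]
    _ = η * c * ∫ s in (0 : ℝ)..1, s * β ^ (s - 1) := by
        rw [intervalIntegral.integral_of_le zero_le_one, integral_Ioc_eq_integral_Ioo,
          MeasureTheory.integral_const_mul]
        field_simp

theorem integral_mul_rpow_sub_one {β : ℝ} (hβ : 0 < β) (hβ1 : β ≠ 1) :
    ∫ s in (0 : ℝ)..1, s * β ^ (s - 1) = (1 - β + β * log β) / (β * log β ^ 2) := by
  have hlog : log β ≠ 0 := log_ne_zero_of_pos_of_ne_one hβ hβ1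
  have hderiv (t : ℝ) : HasDerivAt (fun t => β ^ (t - 1) * (t * log β - 1) / log β ^ 2)
      (t * β ^ (t - 1)) t := by
    refine ((((hasDerivAt_id t).sub_const 1).const_rpow hβ).mul
      (((hasDerivAt_id t).mul_const (log β)).sub_const 1)).div_const (log β ^ 2) |>.congr_deriv ?_
    simp only [id]
    field_simp
    ring
  rw [integral_eq_sub_of_hasDerivAt (fun t _ => hderiv t)
    (Continuous.intervalIntegrable (by fun_prop (disch := exact hβ.ne')) 0 1)]
  simp only [sub_self, rpow_zero, zero_sub, rpow_neg_one]
  field_simp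
  ring

theorem stmt_7_general (β c η : ℝ) (hβ : 0 < β) (hc : 0 < c) :
    (β ≠ 1 →
      ∫ w in Set.Ioi (0 : ℝ), w * rhoMGG10 β c η w =
        η * c * (1 - β + β * Real.log β) / (β * (Real.log β) ^ 2)) ∧
    (β = 1 →
      ∫ w in Set.Ioi (0 : ℝ), w * rhoMGG10 β c η w = η * c / 2) := by
  rw [integral_mul_rhoMGG10 hβ hc]
  refine ⟨fun hβ1 => by rw [integral_mul_rpow_sub_one hβ hβ1]; ring, ?_⟩
  rintro rfl
  simp only [one_rpow, mul_one, integral_id]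
  ring

theorem stmt_7 (β c η : ℝ) (hβ : 0 < β) (hc : 0 < c) (hη : 0 < η) :
    (β ≠ 1 →
      ∫ w in Set.Ioi (0 : ℝ), w * rhoMGG10 β c η w =
        η * c * (1 - β + β * Real.log β) / (β * (Real.log β) ^ 2)) ∧
    (β = 1 →
      ∫ w in Set.Ioi (0 : ℝ), w * rhoMGG10 β c η w = η * c / 2) :=
  stmt_7_general β c η hβ hc
end

section
/- Let ψ_mGG(t) = η[ψ_mSt(β + ct; α, τ) − ψ_mSt(β; α, τ)] with 0 ≤ τ < α ≤ 1, β ≥ 0, c > 0, η > 0. Then ψ_mGG(t) ∼ η c^α ψ_mSt(t; α, τ) as t → ∞. -/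
open Real Filter

/-- Laplace exponent ψ_mSt(t; α, τ) of the mixed stable CRM. -/
noncomputable def psiMSt (α τ t : ℝ) : ℝ :=
  if t = 0 then 0 else if t = 1 then 1 else (t ^ α - t ^ τ) / ((α - τ) * Real.log t)

/-! Since `t ^ τ = o(t ^ α)`, `ψ_mSt(t) ~ t ^ α / ((α - τ) log t)`, which tends to infinity
because `α > 0`. Along `t ↦ β + c t` the numerator scales by `c ^ α` while
`log (β + c t) ~ log t`, so `ψ_mSt(β + c t) ~ c ^ α ψ_mSt(t)`, and the constant `ψ_mSt(β)` is
negligible against this divergent quantity. -/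

open Asymptotics Topology

theorem isLittleO_rpow_rpow_atTop_of_lt {α τ : ℝ} (h : τ < α) :
    (fun t : ℝ ↦ t ^ τ) =o[atTop] fun t ↦ t ^ α := by
  refine (isLittleO_iff_tendsto' ?_).2 ?_
  · filter_upwards [eventually_gt_atTop 0] with t ht hzero
    exact absurd hzero (rpow_pos_of_pos ht α).ne'
  · have := tendsto_rpow_neg_atTop (sub_pos.2 h)
    rw [neg_sub] at this
    refine this.congr' ?_
    filter_upwards [eventually_gt_atTop 0] with t ht using rpow_sub ht τ α

theorem tendsto_rpow_div_log_atTop {α : ℝ} (hα : 0 < α) :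
    Tendsto (fun t ↦ t ^ α / log t) atTop atTop := by
  have hpos : ∀ᶠ t in atTop, 0 < log t / t ^ α := by
    filter_upwards [eventually_gt_atTop 1] with t ht
    exact div_pos (log_pos ht) (rpow_pos_of_pos (zero_lt_one.trans ht) α)
  have h0 : Tendsto (fun t ↦ log t / t ^ α) atTop (𝓝[>] 0) :=
    tendsto_nhdsWithin_iff.2 ⟨(isLittleO_log_rpow_atTop hα).tendsto_div_nhds_zero, hpos⟩
  simpa only [Pi.inv_def, inv_div] using h0.inv_tendsto_nhdsGT_zero

theorem isEquivalent_log_const_add_mul {c : ℝ} (hc : 0 < c) (β : ℝ) :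
    (fun t ↦ log (β + c * t)) ~[atTop] log := by
  have hratio : Tendsto (fun t ↦ (β + c * t) / t) atTop (𝓝 c) := by
    have h := (tendsto_inv_atTop_zero.const_mul β).add_const c
    rw [mul_zero, zero_add] at h
    refine h.congr' ?_
    filter_upwards [eventually_ne_atTop 0] with t ht
    field_simp
  have hlog : Tendsto (fun t ↦ log ((β + c * t) / t)) atTop (𝓝 (log c)) :=
    (continuousAt_log hc.ne').tendsto.comp hratio
  have hdiff : (fun t ↦ log ((β + c * t) / t)) =ᶠ[atTop] fun t ↦ log (β + c * t) - log t := by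
    filter_upwards [eventually_gt_atTop 0,
      (tendsto_atTop_add_const_left _ β (tendsto_id.const_mul_atTop hc)).eventually_gt_atTop 0]
      with t ht hlin using log_div hlin.ne' ht.ne'
  exact ((hlog.isBigO_one ℝ).trans_isLittleO
    (isLittleO_one_left_iff ℝ |>.2 (tendsto_norm_atTop_atTop.comp tendsto_log_atTop))).congr' hdiff
    EventuallyEq.rfl

section psiMSt

variable {α τ : ℝ}

theorem psiMSt_of_one_lt {t : ℝ} (ht : 1 < t) :
    psiMSt α τ t = (t ^ α - t ^ τ) / ((α - τ) * log t) := by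
  rw [psiMSt, if_neg (zero_lt_one.trans ht).ne', if_neg ht.ne']

theorem psiMSt_isEquivalent (h : τ < α) :
    psiMSt α τ ~[atTop] fun t ↦ t ^ α / ((α - τ) * log t) := by
  have hnum : (fun t : ℝ ↦ t ^ α - t ^ τ) ~[atTop] fun t ↦ t ^ α :=
    IsEquivalent.refl.sub_isLittleO (isLittleO_rpow_rpow_atTop_of_lt h)
  refine (hnum.div IsEquivalent.refl).congr_left ?_
  filter_upwards [eventually_gt_atTop 1] with t ht using (psiMSt_of_one_lt ht).symm

theorem tendsto_psiMSt_atTop (hα : 0 < α) (h : τ < α) : Tendsto (psiMSt α τ) atTop atTop := by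
  refine (psiMSt_isEquivalent h).symm.tendsto_atTop ?_
  refine ((tendsto_rpow_div_log_atTop hα).atTop_div_const (sub_pos.2 h)).congr fun t ↦ ?_
  rw [div_div, mul_comm]

theorem psiMSt_const_add_mul_isEquivalent {c : ℝ} (hc : 0 < c) (h : τ < α) (β : ℝ) :
    (fun t ↦ psiMSt α τ (β + c * t)) ~[atTop] fun t ↦ c ^ α * psiMSt α τ t := by
  have hscale : Tendsto (fun t ↦ c * t) atTop atTop := tendsto_id.const_mul_atTop hc
  have hlin : Tendsto (fun t ↦ β + c * t) atTop atTop := tendsto_atTop_add_const_left _ β hscale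
  have hpow : (fun t ↦ (β + c * t) ^ α) ~[atTop] fun t ↦ c ^ α * t ^ α := by
    have hequiv : (fun t ↦ β + c * t) ~[atTop] fun t ↦ c * |t| := by
      refine (IsEquivalent.refl.const_add_of_norm_tendsto_atTop
        (tendsto_norm_atTop_atTop.comp hscale)).congr_right ?_
      filter_upwards [eventually_ge_atTop 0] with t ht
      rw [abs_of_nonneg ht]
    refine (hequiv.rpow fun t ↦ by positivity).congr_right ?_
    filter_upwards [eventually_ge_atTop 0] with t ht
    simp only [Pi.pow_apply, abs_of_nonneg ht, mul_rpow hc.le ht]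
  calc (fun t ↦ psiMSt α τ (β + c * t))
      ~[atTop] fun t ↦ (β + c * t) ^ α / ((α - τ) * log (β + c * t)) :=
        (psiMSt_isEquivalent h).comp_tendsto hlin
    _ ~[atTop] fun t ↦ c ^ α * t ^ α / ((α - τ) * log t) :=
        hpow.div (IsEquivalent.refl.mul (isEquivalent_log_const_add_mul hc β))
    _ =ᶠ[atTop] fun t ↦ c ^ α * (t ^ α / ((α - τ) * log t)) :=
        Eventually.of_forall fun t ↦ mul_div_assoc _ _ _
    _ ~[atTop] fun t ↦ c ^ α * psiMSt α τ t :=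
        IsEquivalent.refl.mul (psiMSt_isEquivalent h).symm

end psiMSt

theorem stmt_8_general (α τ β c η : ℝ) (h0 : 0 ≤ τ) (h1 : τ < α)
    (hc : 0 < c) (hη : 0 < η) :
    Filter.Tendsto
      (fun t : ℝ =>
        (η * (psiMSt α τ (β + c * t) - psiMSt α τ β)) / (η * c ^ α * psiMSt α τ t))
      Filter.atTop (nhds 1) := by
  have hscaled : Tendsto (fun t ↦ c ^ α * psiMSt α τ t) atTop atTop :=
    (tendsto_psiMSt_atTop (h0.trans_lt h1) h1).const_mul_atTop (rpow_pos_of_pos hc α)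
  have hconst : (fun _ ↦ psiMSt α τ β) =o[atTop] fun t ↦ c ^ α * psiMSt α τ t :=
    isLittleO_const_left.2 (Or.inr (tendsto_norm_atTop_atTop.comp hscaled))
  have hequiv : (fun t ↦ η * (psiMSt α τ (β + c * t) - psiMSt α τ β))
      ~[atTop] fun t ↦ η * c ^ α * psiMSt α τ t := by
    have h := (IsEquivalent.refl (u := fun _ : ℝ ↦ η)).mul
      ((psiMSt_const_add_mul_isEquivalent hc h1 β).sub_isLittleO hconst)
    exact h.congr_right (Eventually.of_forall fun t ↦ (mul_assoc η _ _).symm)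
  refine (isEquivalent_iff_tendsto_one ?_).1 hequiv
  filter_upwards [hscaled.eventually_gt_atTop 0] with t ht
  rw [mul_assoc]
  exact (mul_pos hη ht).ne'

theorem stmt_8 (α τ β c η : ℝ) (h0 : 0 ≤ τ) (h1 : τ < α) (h2 : α ≤ 1)
    (hβ : 0 ≤ β) (hc : 0 < c) (hη : 0 < η) :
    Filter.Tendsto
      (fun t : ℝ =>
        (η * (psiMSt α τ (β + c * t) - psiMSt α τ β)) / (η * c ^ α * psiMSt α τ t))
      Filter.atTop (nhds 1) :=
  stmt_8_general α τ β c η h0 h1 hc hη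
end

section
/- Let f(z) = ∫_0^{a} (u/Γ(1−u)) e^{−u z} du for fixed a ∈ (0, 1]. Then f(z) ∼ z^{−2} as z → ∞. -/
open Real Filter Topology Asymptotics Set intervalIntegral MeasureTheory

/-!
Since `1/Γ` is entire, `g(u) = u / Γ(1 - u)` is continuous and `g(u) = u + o(u)` as `u → 0`.
The main term is explicit: `z² ∫₀ᵃ u e^{-uz} du = 1 - (1 + az) e^{-az} → 1`. For the remainder
`h = g - id`, split `[0, a]` at a small `δ` with `|h u| ≤ ε u` on `(0, δ)`: the first piece
contributes at most `ε / z²`, the second is `O(e^{-δz}) = o(z⁻²)`.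
-/

lemma Real.continuous_inv_Gamma : Continuous fun x : ℝ => (Gamma x)⁻¹ := by
  have h : (fun x : ℝ => (Gamma x)⁻¹) = fun x : ℝ => ((Complex.Gamma x)⁻¹).re := by
    ext x
    rw [Complex.Gamma_ofReal, ← Complex.ofReal_inv, Complex.ofReal_re]
  rw [h]
  exact Complex.continuous_re.comp
    (Complex.differentiable_one_div_Gamma.continuous.comp Complex.continuous_ofReal)

lemma tendsto_pow_mul_exp_neg_mul_atTop_nhds_zero (n : ℕ) {b : ℝ} (hb : 0 < b) :
    Tendsto (fun x : ℝ => x ^ n * exp (-b * x)) atTop (𝓝 0) :=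
  (tendsto_rpow_mul_exp_neg_mul_atTop_nhds_zero n b hb).congr fun x => by rw [rpow_natCast]

lemma integral_id_mul_exp_neg_mul {z : ℝ} (hz : z ≠ 0) (b : ℝ) :
    ∫ u in (0:ℝ)..b, u * exp (-u * z) = (1 - (1 + b * z) * exp (-b * z)) / z ^ 2 := by
  have hderiv : ∀ u : ℝ, HasDerivAt (fun u => -((1 + u * z) * exp (-u * z)) / z ^ 2)
      (u * exp (-u * z)) u := by
    intro u
    have hlin : HasDerivAt (fun u : ℝ => 1 + u * z) z u := by
      simpa using ((hasDerivAt_id u).mul_const z).const_add 1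
    have hexp : HasDerivAt (fun u : ℝ => exp (-u * z)) (exp (-u * z) * (-1 * z)) u :=
      ((hasDerivAt_id u).neg.mul_const z).exp
    refine ((hlin.mul hexp).neg.div_const (z ^ 2)).congr_deriv ?_
    field_simp
    ring
  rw [integral_eq_sub_of_hasDerivAt (fun u _ => hderiv u)
    (Continuous.intervalIntegrable (by fun_prop) _ _)]
  simp only [zero_mul, neg_zero, exp_zero, add_zero, mul_one]
  ring

lemma integral_id_mul_exp_neg_mul_le {z : ℝ} (hz : 0 < z) (b : ℝ) (hb : 0 ≤ b) :
    ∫ u in (0:ℝ)..b, u * exp (-u * z) ≤ 1 / z ^ 2 := by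
  rw [integral_id_mul_exp_neg_mul hz.ne']
  gcongr
  have : 0 ≤ (1 + b * z) * exp (-b * z) := by positivity
  linarith

lemma tendsto_sq_mul_integral_id_mul_exp_neg_mul {a : ℝ} (ha : 0 < a) :
    Tendsto (fun z => z ^ 2 * ∫ u in (0:ℝ)..a, u * exp (-u * z)) atTop (𝓝 1) := by
  have hlim : Tendsto (fun z : ℝ => 1 - (z ^ 0 * exp (-a * z) + a * (z ^ 1 * exp (-a * z))))
      atTop (𝓝 (1 - (0 + a * 0))) :=
    tendsto_const_nhds.sub ((tendsto_pow_mul_exp_neg_mul_atTop_nhds_zero 0 ha).add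
      ((tendsto_pow_mul_exp_neg_mul_atTop_nhds_zero 1 ha).const_mul a))
  rw [mul_zero, add_zero, sub_zero] at hlim
  refine hlim.congr' ?_
  filter_upwards [eventually_ne_atTop 0] with z hz
  rw [integral_id_mul_exp_neg_mul hz]
  field_simp

lemma abs_integral_mul_exp_neg_mul_le_of_abs_le {h : ℝ → ℝ} {ε δ z : ℝ} (hε : 0 ≤ ε)
    (hδ : 0 ≤ δ) (hz : 0 < z) (hint : IntervalIntegrable h volume 0 δ)
    (hh : ∀ u ∈ Ioo 0 δ, |h u| ≤ ε * u) :
    |∫ u in (0:ℝ)..δ, h u * exp (-u * z)| ≤ ε / z ^ 2 := by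
  calc |∫ u in (0:ℝ)..δ, h u * exp (-u * z)|
      ≤ ∫ u in (0:ℝ)..δ, |h u * exp (-u * z)| := abs_integral_le_integral_abs hδ
    _ ≤ ∫ u in (0:ℝ)..δ, ε * (u * exp (-u * z)) := by
        refine integral_mono_on_of_le_Ioo hδ (hint.mul_continuousOn (by fun_prop)).abs
          (Continuous.intervalIntegrable (by fun_prop) _ _) fun u hu => ?_
        rw [abs_mul, abs_of_pos (exp_pos _), ← mul_assoc]
        gcongr
        exact hh u hu
    _ = ε * ∫ u in (0:ℝ)..δ, u * exp (-u * z) := integral_const_mul _ _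
    _ ≤ ε * (1 / z ^ 2) := by gcongr; exact integral_id_mul_exp_neg_mul_le hz δ hδ
    _ = ε / z ^ 2 := mul_one_div _ _

lemma abs_integral_mul_exp_neg_mul_le {h : ℝ → ℝ} {δ a z : ℝ} (hδa : δ ≤ a) (hz : 0 ≤ z)
    (hint : IntervalIntegrable h volume δ a) :
    |∫ u in δ..a, h u * exp (-u * z)| ≤ (∫ u in δ..a, |h u|) * exp (-δ * z) := by
  calc |∫ u in δ..a, h u * exp (-u * z)|
      ≤ ∫ u in δ..a, |h u * exp (-u * z)| := abs_integral_le_integral_abs hδa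
    _ ≤ ∫ u in δ..a, |h u| * exp (-δ * z) := by
        refine integral_mono_on hδa (hint.mul_continuousOn (by fun_prop)).abs
          (hint.abs.mul_const _) fun u hu => ?_
        rw [abs_mul, abs_of_pos (exp_pos _)]
        gcongr
        nlinarith [hu.1]
    _ = (∫ u in δ..a, |h u|) * exp (-δ * z) := integral_mul_const _ _

theorem tendsto_sq_mul_integral_mul_exp_neg_mul_of_isLittleO {h : ℝ → ℝ} {a : ℝ} (ha : 0 < a)
    (hint : IntervalIntegrable h volume 0 a) (hh : h =o[𝓝[>] 0] id) :
    Tendsto (fun z => z ^ 2 * ∫ u in (0:ℝ)..a, h u * exp (-u * z)) atTop (𝓝 0) := by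
  rw [Metric.tendsto_nhds]
  intro ε hε
  obtain ⟨δ, hδ, hδa, hsmall⟩ : ∃ δ, 0 < δ ∧ δ ≤ a ∧ ∀ u ∈ Ioo 0 δ, |h u| ≤ ε / 2 * u := by
    obtain ⟨δ₀, hδ₀, hsub⟩ := mem_nhdsGT_iff_exists_Ioo_subset.mp (hh.def (half_pos hε))
    refine ⟨min δ₀ a, lt_min hδ₀ ha, min_le_right _ _, fun u hu => ?_⟩
    have := hsub ⟨hu.1, hu.2.trans_le (min_le_left _ _)⟩
    rwa [mem_ofPred_eq, norm_eq_abs, norm_eq_abs, id, abs_of_pos hu.1] at this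
  set C := ∫ u in δ..a, |h u|
  have htail : Tendsto (fun z : ℝ => C * (z ^ 2 * exp (-δ * z))) atTop (𝓝 0) := by
    simpa using (tendsto_pow_mul_exp_neg_mul_atTop_nhds_zero 2 hδ).const_mul C
  filter_upwards [eventually_gt_atTop 0, htail.eventually (gt_mem_nhds (half_pos hε))]
    with z hz htail_z
  have hint₁ : IntervalIntegrable h volume 0 δ := hint.mono_set (by
    rw [uIcc_of_le hδ.le, uIcc_of_le ha.le]; exact Icc_subset_Icc_right hδa)
  have hint₂ : IntervalIntegrable h volume δ a := hint.mono_set (by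
    rw [uIcc_of_le hδa, uIcc_of_le ha.le]; exact Icc_subset_Icc_left hδ.le)
  have hhead := abs_integral_mul_exp_neg_mul_le_of_abs_le (half_pos hε).le hδ.le hz hint₁ hsmall
  have hrest := abs_integral_mul_exp_neg_mul_le hδa hz.le hint₂
  rw [dist_zero_right, ← integral_add_adjacent_intervals
    (hint₁.mul_continuousOn (by fun_prop)) (hint₂.mul_continuousOn (by fun_prop)),
    norm_mul, norm_pow, norm_eq_abs, abs_of_pos hz]
  calc z ^ 2 * ‖(∫ u in (0:ℝ)..δ, h u * exp (-u * z)) + ∫ u in δ..a, h u * exp (-u * z)‖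
      ≤ z ^ 2 * (ε / 2 / z ^ 2 + C * exp (-δ * z)) := by
        gcongr
        exact (norm_add_le _ _).trans (add_le_add hhead hrest)
    _ = ε / 2 + C * (z ^ 2 * exp (-δ * z)) := by field_simp
    _ < ε := by linarith

lemma continuous_inv_Gamma_one_sub : Continuous fun u : ℝ => (Gamma (1 - u))⁻¹ :=
  continuous_inv_Gamma.comp (continuous_const.sub continuous_id)

lemma isLittleO_div_Gamma_one_sub_sub_self :
    (fun u : ℝ => u / Gamma (1 - u) - u) =o[𝓝 0] id := by
  have hlim : Tendsto (fun u : ℝ => (Gamma (1 - u))⁻¹ - 1) (𝓝 0) (𝓝 0) := by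
    simpa [Gamma_one] using ((continuous_inv_Gamma_one_sub.tendsto 0).sub_const 1)
  refine ((isBigO_refl id _).mul_isLittleO ((isLittleO_one_iff ℝ).mpr hlim)).congr
    (fun u => ?_) (fun u => ?_)
  · simp only [id, div_eq_mul_inv]
    ring
  · simp only [mul_one]

theorem stmt_9_general (a : ℝ) (ha : 0 < a) :
    Filter.Tendsto
      (fun z : ℝ => (∫ u in (0:ℝ)..a, (u / Real.Gamma (1 - u)) * Real.exp (-u * z)) / z ^ (-2 : ℝ))
      Filter.atTop (nhds 1) := by
  have hcont : Continuous fun u : ℝ => u / Gamma (1 - u) - u :=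
    (continuous_id.mul continuous_inv_Gamma_one_sub).sub continuous_id
  have hlim := (tendsto_sq_mul_integral_id_mul_exp_neg_mul ha).add
    (tendsto_sq_mul_integral_mul_exp_neg_mul_of_isLittleO ha (hcont.intervalIntegrable 0 a)
      (isLittleO_div_Gamma_one_sub_sub_self.mono nhdsWithin_le_nhds))
  rw [add_zero] at hlim
  refine hlim.congr' ?_
  filter_upwards [eventually_gt_atTop 0] with z hz
  have hint : IntervalIntegrable (fun u => (u / Gamma (1 - u) - u) * exp (-u * z)) volume 0 a :=
    (hcont.mul (by fun_prop)).intervalIntegrable _ _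
  rw [← mul_add, ← integral_add (Continuous.intervalIntegrable (by fun_prop) _ _) hint,
    rpow_neg hz.le, rpow_two, div_inv_eq_mul, mul_comm]
  simp only [← add_mul, add_sub_cancel]

theorem stmt_9 (a : ℝ) (ha : 0 < a) (ha1 : a ≤ 1) :
    Filter.Tendsto
      (fun z : ℝ => (∫ u in (0:ℝ)..a, (u / Real.Gamma (1 - u)) * Real.exp (-u * z)) / z ^ (-2 : ℝ))
      Filter.atTop (nhds 1) :=
  stmt_9_general a ha
end

section
/- For the mixed stable Lévy intensity with α = 1, ρ_mSt(w; 1, τ) ∼ (1/(1−τ)) w^{−2}/log²(1/w) as w → 0. -/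
open Real Filter Set intervalIntegral

/-- Lévy intensity of the mixed stable CRM. -/
noncomputable def rhoMSt (α τ w : ℝ) : ℝ :=
  (1 / (α - τ)) * ∫ s in τ..α, (s / Real.Gamma (1 - s)) * w ^ (-1 - s)

/-!
Put `L = log (1 / w)` and `t = 1 - s`. Then `w ^ (-1 - s) = w ^ (-2) * exp (-(t * L))` and
`s / Γ (1 - s) = t * g t` with `g t = (1 - t) / Γ (t + 1)`, which is continuous with `g 0 = 1`,
so the ratio equals `L ^ 2 * ∫ t in 0..1 - τ, t * g t * exp (-(t * L))`. This is the first-order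
case of Watson's lemma: the substitution `u = t * L` turns it into
`∫ u in 0..(1 - τ) * L, u * g (u / L) * exp (-u)`, which tends to `g 0 * ∫₀^∞ u e^{-u} du = g 0`
by dominated convergence, with dominating function `(sup |g|) * u * exp (-u)`.
-/

open MeasureTheory Topology

lemma integral_mul_exp_neg_Ioi : ∫ u in Ioi (0 : ℝ), u * exp (-u) = 1 := by
  simpa [show (2 : ℝ) - 1 = 1 by norm_num] using integral_rpow_mul_exp_neg_mul_Ioi two_pos one_pos

lemma integrableOn_mul_exp_neg_Ioi : IntegrableOn (fun u : ℝ => u * exp (-u)) (Ioi 0) := by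
  simpa [show (2 : ℝ) - 1 = 1 by norm_num, mul_comm] using GammaIntegral_convergent two_pos

/-- Valid for every `t`, since Mathlib's `Gamma` vanishes at the poles. -/
lemma div_Gamma_eq_mul_div_Gamma_add_one (x t : ℝ) : x / Gamma t = t * (x / Gamma (t + 1)) := by
  rcases eq_or_ne t 0 with rfl | ht
  · simp [Gamma_zero]
  · rw [Gamma_add_one ht, mul_div_assoc', mul_div_mul_left x _ ht]

lemma continuousOn_one_sub_div_Gamma_add_one :
    ContinuousOn (fun t => (1 - t) / Gamma (t + 1)) (Ioi (-1)) := fun t ht => by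
  have hpos : 0 < t + 1 := by simpa [neg_lt_iff_pos_add] using ht
  have hΓ : ContinuousAt Gamma (t + 1) :=
    (differentiableAt_Gamma fun m => by linarith [(m.cast_nonneg : (0 : ℝ) ≤ m)]).continuousAt
  exact ((continuousAt_const.sub continuousAt_id).div
    (hΓ.comp (f := fun t => t + 1) (by fun_prop)) (Gamma_pos_of_pos hpos).ne').continuousWithinAt

section Watson

variable {g : ℝ → ℝ} {a : ℝ}

noncomputable def rescaledIntegrand (g : ℝ → ℝ) (a L : ℝ) : ℝ → ℝ :=
  (Ioc 0 (a * L)).indicator fun u => u * g (u / L) * exp (-u)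

lemma sq_mul_integral_eq_integral_rescaledIntegrand {L : ℝ} (ha : 0 ≤ a) (hL : 0 < L) :
    L ^ 2 * ∫ t in 0..a, t * g t * exp (-(t * L)) =
      ∫ u in Ioi 0, rescaledIntegrand g a L u := by
  have hsubst := integral_comp_mul_right (a := 0) (b := a)
    (fun u => u * g (u / L) * exp (-u)) hL.ne'
  rw [zero_mul, smul_eq_mul, eq_inv_mul_iff_mul_eq₀ hL.ne'] at hsubst
  rw [rescaledIntegrand, setIntegral_indicator measurableSet_Ioc,
    inter_eq_right.2 Ioc_subset_Ioi_self, ← integral_of_le (by positivity), ← hsubst, sq,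
    mul_assoc, ← intervalIntegral.integral_const_mul]
  congr 2 with t
  rw [mul_div_cancel_right₀ _ hL.ne']
  ring

lemma aestronglyMeasurable_rescaledIntegrand (hg : ContinuousOn g (Icc 0 a)) {L : ℝ}
    (hL : 0 < L) : AEStronglyMeasurable (rescaledIntegrand g a L) := by
  have hmaps : MapsTo (fun u => u / L) (Ioc 0 (a * L)) (Icc 0 a) := fun u hu =>
    ⟨div_nonneg hu.1.le hL.le, (div_le_iff₀ hL).2 hu.2⟩
  have hcont : ContinuousOn (fun u => u * g (u / L) * exp (-u)) (Ioc 0 (a * L)) :=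
    (continuousOn_id.mul (hg.comp (continuousOn_id.div_const L) hmaps)).mul
      (continuous_exp.comp continuous_neg).continuousOn
  exact (aestronglyMeasurable_indicator_iff measurableSet_Ioc).2
    (hcont.aestronglyMeasurable measurableSet_Ioc)

lemma norm_rescaledIntegrand_le {C L u : ℝ} (ha : 0 ≤ a) (hC : ∀ t ∈ Icc 0 a, ‖g t‖ ≤ C)
    (hL : 0 < L) (hu : 0 < u) : ‖rescaledIntegrand g a L u‖ ≤ C * (u * exp (-u)) := by
  by_cases hmem : u ∈ Ioc 0 (a * L)
  · have ht : u / L ∈ Icc 0 a := ⟨by positivity, (div_le_iff₀ hL).2 hmem.2⟩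
    rw [rescaledIntegrand, indicator_of_mem hmem, norm_mul, norm_mul, norm_of_nonneg hu.le,
      norm_of_nonneg (exp_pos _).le]
    calc u * ‖g (u / L)‖ * exp (-u) ≤ u * C * exp (-u) := by gcongr; exact hC _ ht
      _ = C * (u * exp (-u)) := by ring
  · have hC0 : 0 ≤ C := (norm_nonneg _).trans (hC 0 ⟨le_rfl, ha⟩)
    rw [rescaledIntegrand, indicator_of_notMem hmem, norm_zero]
    positivity

lemma tendsto_rescaledIntegrand (ha : 0 < a) (hg : ContinuousWithinAt g (Icc 0 a) 0) {u : ℝ}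
    (hu : 0 < u) :
    Tendsto (fun L => rescaledIntegrand g a L u) atTop (𝓝 (u * g 0 * exp (-u))) := by
  have hlarge : ∀ᶠ L in atTop, u < a * L := (eventually_gt_atTop (u / a)).mono fun L hL => by
    rwa [div_lt_iff₀ ha, mul_comm] at hL
  have hdiv : Tendsto (fun L => u / L) atTop (𝓝[Icc 0 a] 0) := by
    refine tendsto_nhdsWithin_iff.2 ⟨tendsto_const_nhds.div_atTop tendsto_id, ?_⟩
    filter_upwards [hlarge, eventually_gt_atTop 0] with L hL hL0
    exact ⟨by positivity, (div_le_iff₀ hL0).2 (by linarith)⟩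
  refine ((tendsto_const_nhds.mul (hg.tendsto.comp hdiv)).mul tendsto_const_nhds).congr' ?_
  filter_upwards [hlarge] with L hL
  rw [rescaledIntegrand, indicator_of_mem (show u ∈ Ioc 0 (a * L) from ⟨hu, hL.le⟩)]
  rfl

theorem tendsto_sq_mul_integral_mul_exp_neg_mul (ha : 0 < a) (hg : ContinuousOn g (Icc 0 a)) :
    Tendsto (fun L => L ^ 2 * ∫ t in 0..a, t * g t * exp (-(t * L))) atTop (𝓝 (g 0)) := by
  obtain ⟨C, hC⟩ := isCompact_Icc.exists_bound_of_continuousOn hg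
  have hmass : ∫ u in Ioi 0, u * g 0 * exp (-u) = g 0 := by
    simp_rw [mul_right_comm _ (g 0), MeasureTheory.integral_mul_const, integral_mul_exp_neg_Ioi,
      one_mul]
  have hdom := tendsto_integral_filter_of_dominated_convergence (μ := volume.restrict (Ioi 0))
    (F := rescaledIntegrand g a) (fun u => C * (u * exp (-u)))
    ((eventually_gt_atTop 0).mono fun L hL =>
      (aestronglyMeasurable_rescaledIntegrand hg hL).restrict)
    ((eventually_gt_atTop 0).mono fun L hL => (ae_restrict_iff' measurableSet_Ioi).2 <|
      ae_of_all _ fun u hu => norm_rescaledIntegrand_le ha.le hC hL hu)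
    (integrableOn_mul_exp_neg_Ioi.const_mul C)
    ((ae_restrict_iff' measurableSet_Ioi).2 <| ae_of_all _ fun u hu =>
      tendsto_rescaledIntegrand ha (hg 0 ⟨le_rfl, ha.le⟩) hu)
  rw [hmass] at hdom
  refine hdom.congr' ?_
  filter_upwards [eventually_gt_atTop 0] with L hL
  rw [sq_mul_integral_eq_integral_rescaledIntegrand ha.le hL]

end Watson

lemma rhoMSt_one_eq (τ : ℝ) {w : ℝ} (hw : 0 < w) :
    rhoMSt 1 τ w = 1 / (1 - τ) * w ^ (-2 : ℝ) *
      ∫ t in 0..1 - τ, t * ((1 - t) / Gamma (t + 1)) * exp (-(t * log (1 / w))) := by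
  have hsubst := integral_comp_sub_left (a := 0) (b := 1 - τ)
    (fun s => s / Gamma (1 - s) * w ^ (-1 - s)) 1
  rw [sub_sub_cancel, sub_zero] at hsubst
  rw [rhoMSt, ← hsubst, mul_assoc]
  congr 1
  rw [← intervalIntegral.integral_const_mul]
  refine intervalIntegral.integral_congr fun (t : ℝ) _ => ?_
  have hpow : w ^ (-1 - (1 - t)) = w ^ (-2 : ℝ) * exp (-(t * log (1 / w))) := by
    rw [rpow_def_of_pos hw, rpow_def_of_pos hw, ← exp_add, one_div, log_inv]
    ring_nf
  rw [sub_sub_cancel, div_Gamma_eq_mul_div_Gamma_add_one, hpow]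
  ring

theorem stmt_11_general (τ : ℝ) (h1 : τ < 1) :
    Filter.Tendsto
      (fun w : ℝ =>
        rhoMSt 1 τ w / ((1 / (1 - τ)) * w ^ (-2 : ℝ) / (Real.log (1 / w)) ^ 2))
      (nhdsWithin 0 (Set.Ioi 0)) (nhds 1) := by
  have hlog : Tendsto (fun w : ℝ => log (1 / w)) (𝓝[>] 0) atTop := by
    simpa only [one_div, Function.comp_def] using
      tendsto_log_atTop.comp (tendsto_inv_nhdsGT_zero (𝕜 := ℝ))
  have hg : ContinuousOn (fun t => (1 - t) / Gamma (t + 1)) (Icc 0 (1 - τ)) :=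
    continuousOn_one_sub_div_Gamma_add_one.mono fun t ht => by
      simp only [mem_Ioi]; linarith [ht.1]
  have hwatson := (tendsto_sq_mul_integral_mul_exp_neg_mul (sub_pos.2 h1) hg).comp hlog
  rw [zero_add, Gamma_one, sub_zero, div_one] at hwatson
  refine hwatson.congr' ?_
  filter_upwards [Ioo_mem_nhdsGT one_pos] with w ⟨hw0, hw1⟩
  have hL : log (1 / w) ≠ 0 := (log_pos (one_lt_one_div hw0 hw1)).ne'
  have hτ : 1 - τ ≠ 0 := (sub_pos.2 h1).ne'
  rw [Function.comp_apply, rhoMSt_one_eq τ hw0]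
  field_simp

theorem stmt_11 (τ : ℝ) (h0 : 0 ≤ τ) (h1 : τ < 1) :
    Filter.Tendsto
      (fun w : ℝ =>
        rhoMSt 1 τ w / ((1 / (1 - τ)) * w ^ (-2 : ℝ) / (Real.log (1 / w)) ^ 2))
      (nhdsWithin 0 (Set.Ioi 0)) (nhds 1) :=
  stmt_11_general τ h1
end

section
/- For 0 ≤ τ < α < 1, ρ_mSt(w; α, τ) ∼ (α/((α−τ)Γ(1−α))) w^{−1−α}/log(1/w) as w → 0. -/
/-!
Write `g s = s / Γ(1 - s)`. Multiplying `ρ_mSt(w)` by `(α - τ) w^{1+α} log(1/w)` turns it into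
`∫_τ^α K_w(s) g(s) ds` with `K_w(s) = log(1/w) w^{α-s}`. As `w → 0+` the kernels `K_w` are
nonnegative, have total mass `1 - w^{α-τ} → 1`, and tend to `0` uniformly on `s ≤ α - δ`,
so they are peak functions concentrating at `α` and the integral tends to `g(α) = α / Γ(1 - α)`.
-/

open Real Filter Set intervalIntegral MeasureTheory Topology

lemma continuous_const_rpow_sub {w : ℝ} (hw : 0 < w) (α : ℝ) :
    Continuous fun x => w ^ (α - x) :=
  continuous_const.rpow (continuous_const.sub continuous_id) fun _ => .inl hw.ne'

lemma hasDerivAt_const_rpow_sub {w : ℝ} (hw : 0 < w) (α x : ℝ) :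
    HasDerivAt (fun x => w ^ (α - x)) (-log w * w ^ (α - x)) x := by
  have := ((hasDerivAt_id x).const_sub α).const_rpow hw
  simpa [mul_comm, mul_left_comm] using this

lemma integral_neg_log_mul_rpow_sub {w : ℝ} (hw : 0 < w) (τ α : ℝ) :
    ∫ x in τ..α, -log w * w ^ (α - x) = 1 - w ^ (α - τ) := by
  rw [integral_eq_sub_of_hasDerivAt (fun x _ => hasDerivAt_const_rpow_sub hw α x)]
  · simp
  · exact (continuous_const.mul (continuous_const_rpow_sub hw α)).intervalIntegrable _ _

lemma tendstoUniformlyOn_neg_log_mul_rpow_sub {α δ : ℝ} (hδ : 0 < δ) :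
    TendstoUniformlyOn (fun w x => -log w * w ^ (α - x)) 0 (𝓝[>] 0) {x | δ ≤ α - x} := by
  have hlim : Tendsto (fun w => -log w * w ^ δ) (𝓝[>] 0) (𝓝 0) := by
    simpa using (tendsto_log_mul_rpow_nhdsGT_zero hδ).neg
  rw [Metric.tendstoUniformlyOn_iff]
  intro ε hε
  filter_upwards [Ioo_mem_nhdsGT one_pos, hlim.eventually (eventually_lt_nhds hε)]
    with w ⟨hw0, hw1⟩ hwε x hx
  have hlog : 0 ≤ -log w := neg_nonneg.2 (log_nonpos hw0.le hw1.le)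
  have hle : w ^ (α - x) ≤ w ^ δ := rpow_le_rpow_of_exponent_ge hw0 hw1.le hx
  rw [Pi.zero_apply, dist_zero_left, Real.norm_of_nonneg (by positivity)]
  exact (mul_le_mul_of_nonneg_left hle hlog).trans_lt hwε

lemma tendsto_rpow_nhdsGT_zero {y : ℝ} (hy : 0 < y) :
    Tendsto (fun w : ℝ => w ^ y) (𝓝[>] 0) (𝓝 0) := by
  have := ((continuous_rpow_const hy.le).tendsto 0).mono_left (nhdsWithin_le_nhds (s := Ioi 0))
  rwa [zero_rpow hy.ne'] at this

theorem tendsto_integral_neg_log_mul_rpow_sub_smul {E : Type*} [NormedAddCommGroup E]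
    [NormedSpace ℝ E] [CompleteSpace E] {g : ℝ → E} {τ α : ℝ} (hτα : τ < α)
    (hgi : IntegrableOn g (Icc τ α)) (hgα : ContinuousWithinAt g (Icc τ α) α) :
    Tendsto (fun w => ∫ x in τ..α, (-log w * w ^ (α - x)) • g x) (𝓝[>] 0) (𝓝 (g α)) := by
  simp only [integral_of_le hτα.le, ← integral_Icc_eq_integral_Ioc]
  refine tendsto_setIntegral_peak_smul_of_integrableOn_of_tendsto measurableSet_Icc
    measurableSet_Icc subset_rfl self_mem_nhdsWithin measure_Icc_lt_top.ne ?_ ?_ ?_ ?_ hgi hgα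
  · filter_upwards [Ioo_mem_nhdsGT one_pos] with w ⟨hw0, hw1⟩ x _
    have : 0 ≤ -log w := neg_nonneg.2 (log_nonpos hw0.le hw1.le)
    positivity
  · intro u hu hαu
    obtain ⟨δ, hδ, hδu⟩ := Metric.isOpen_iff.1 hu α hαu
    refine (tendstoUniformlyOn_neg_log_mul_rpow_sub hδ).mono fun x ⟨⟨_, hxα⟩, hxu⟩ =>
      show δ ≤ α - x from le_of_not_gt fun hx => hxu (hδu ?_)
    rw [Metric.mem_ball, dist_comm, Real.dist_eq, abs_lt]
    constructor <;> linarith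
  · have hmass : Tendsto (fun w : ℝ => 1 - w ^ (α - τ)) (𝓝[>] 0) (𝓝 1) := by
      simpa using tendsto_const_nhds.sub (tendsto_rpow_nhdsGT_zero (sub_pos.2 hτα))
    refine hmass.congr' ?_
    filter_upwards [self_mem_nhdsWithin] with w hw
    rw [integral_Icc_eq_integral_Ioc, ← integral_of_le hτα.le,
      integral_neg_log_mul_rpow_sub hw]
  · filter_upwards [self_mem_nhdsWithin] with w hw
    exact (continuous_const.mul (continuous_const_rpow_sub hw α)).aestronglyMeasurable

lemma continuousOn_div_Gamma_one_sub : ContinuousOn (fun s : ℝ => s / Gamma (1 - s)) (Iio 1) := by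
  intro s hs
  have hpos : 0 < 1 - s := sub_pos.2 hs
  have hΓ : ContinuousAt (fun s : ℝ => Gamma (1 - s)) s :=
    (differentiableAt_Gamma fun m hm => by linarith [Nat.cast_nonneg (α := ℝ) m]).continuousAt.comp
      (continuous_const.sub continuous_id).continuousAt
  exact (continuousAt_id.div hΓ (Gamma_pos_of_pos hpos).ne').continuousWithinAt

lemma integral_neg_log_mul_rpow_sub_smul_eq_rhoMSt {α τ w : ℝ} (hw : 0 < w) (hτα : τ ≠ α) :
    ∫ x in τ..α, (-log w * w ^ (α - x)) • (x / Gamma (1 - x)) =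
      (α - τ) * log (1 / w) * w ^ (1 + α) * rhoMSt α τ w := by
  have hpt : ∀ x, (-log w * w ^ (α - x)) • (x / Gamma (1 - x)) =
      (-log w * w ^ (1 + α)) * (x / Gamma (1 - x) * w ^ (-1 - x)) := by
    intro x
    rw [smul_eq_mul, show α - x = (1 + α) + (-1 - x) by ring, rpow_add hw]
    ring
  simp only [hpt, intervalIntegral.integral_const_mul, rhoMSt, one_div, log_inv]
  field_simp [sub_ne_zero.2 hτα.symm]

theorem stmt_12 (α τ : ℝ) (h0 : 0 ≤ τ) (h1 : τ < α) (h2 : α < 1) :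
    Filter.Tendsto
      (fun w : ℝ =>
        rhoMSt α τ w /
          ((α / ((α - τ) * Real.Gamma (1 - α))) * w ^ (-1 - α) / Real.log (1 / w)))
      (nhdsWithin 0 (Set.Ioi 0)) (nhds 1) := by
  have hα : 0 < α := h0.trans_lt h1
  have hΓ : 0 < Gamma (1 - α) := Gamma_pos_of_pos (sub_pos.2 h2)
  have hg : ContinuousOn (fun s : ℝ => s / Gamma (1 - s)) (Icc τ α) :=
    continuousOn_div_Gamma_one_sub.mono fun s hs => hs.2.trans_lt h2
  have hlim := (tendsto_integral_neg_log_mul_rpow_sub_smul h1 hg.integrableOn_Icc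
    (hg α (right_mem_Icc.2 h1.le))).mul_const (Gamma (1 - α) / α)
  rw [div_mul_div_cancel₀ hΓ.ne', div_self hα.ne'] at hlim
  refine hlim.congr' ?_
  filter_upwards [Ioo_mem_nhdsGT one_pos] with w ⟨hw0, hw1⟩
  have hlog : log (1 / w) ≠ 0 := by
    rw [one_div, log_inv, neg_ne_zero]; exact (log_neg hw0 hw1).ne
  have hpow : w ^ (1 + α) * w ^ (-1 - α) = 1 := by
    rw [← rpow_add hw0, show 1 + α + (-1 - α) = 0 by ring, rpow_zero]
  rw [integral_neg_log_mul_rpow_sub_smul_eq_rhoMSt hw0 h1.ne]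
  field_simp
  linear_combination (α - τ) * rhoMSt α τ w * hpow
end

section
/- Let z > 0, z ≠ 1, 0 ≤ τ < α ≤ 1, and let F(x) = (∫_τ^x s z^s ds)/(∫_τ^α s z^s ds) for x ∈ (τ, α). If z > 1 then F^{-1}(y) = (W_0(c(y)/e) + 1)/log z, and if z < 1 then F^{-1}(y) = (W_{−1}(c(y)/e) + 1)/log z, where c(y) = (z^τ − z^α + (α z^α − τ z^τ) log z) y − z^τ + τ z^τ log z and W_k is the k-th real branch of the Lambert W function. -/
open Real intervalIntegral

/-- CDF of the density p(s|t) ∝ s z^s on (τ, α). -/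
noncomputable def Fcdf (z τ α x : ℝ) : ℝ :=
  (∫ s in τ..x, s * z ^ s) / (∫ s in τ..α, s * z ^ s)

/-- The constant c(y) appearing in the inverse CDF. -/
noncomputable def cInv (z τ α y : ℝ) : ℝ :=
  (z ^ τ - z ^ α + (α * z ^ α - τ * z ^ τ) * Real.log z) * y
    - z ^ τ + τ * z ^ τ * Real.log z

/-!
With `L = log z`, the function `g(s) = z^s (s L - 1)` satisfies `g' (s) = L² s z^s`, so
`F(x) = (g x - g τ) / (g α - g τ)` and, since `c(y) = (g α - g τ) y + g τ`, we get `c(F x) = g x`.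
As `g x / e = (x L - 1) e^{x L - 1}`, the number `w` and `x L - 1` have the same image under
`t ↦ t e^t`. This map is injective on `[-1, ∞)` and on `(-∞, -1]`, and `x L - 1` lies on the side
of `-1` prescribed for `w` by the sign of `L`, so `w = x L - 1`.
-/

noncomputable def scaledPrimitive (z s : ℝ) : ℝ := z ^ s * (s * Real.log z - 1)

lemma hasDerivAt_scaledPrimitive {z : ℝ} (hz : 0 < z) (s : ℝ) :
    HasDerivAt (scaledPrimitive z) (Real.log z ^ 2 * (s * z ^ s)) s := by
  have hexp : HasDerivAt (fun s : ℝ => z ^ s) (z ^ s * Real.log z) s :=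
    (hasStrictDerivAt_const_rpow hz s).hasDerivAt
  have hlin : HasDerivAt (fun s : ℝ => s * Real.log z - 1) (Real.log z) s := by
    simpa using ((hasDerivAt_id s).mul_const (Real.log z)).sub_const 1
  refine (hexp.fun_mul hlin).congr_deriv ?_
  ring

lemma continuous_mul_rpow {z : ℝ} (hz : 0 < z) : Continuous fun s : ℝ => s * z ^ s :=
  continuous_id.mul (continuous_const.rpow continuous_id fun _ => Or.inl hz.ne')

lemma integral_mul_rpow {z : ℝ} (hz : 0 < z) (hL : Real.log z ≠ 0) (a b : ℝ) :
    ∫ s in a..b, s * z ^ s = (scaledPrimitive z b - scaledPrimitive z a) / Real.log z ^ 2 := by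
  rw [eq_div_iff (pow_ne_zero 2 hL), mul_comm, ← integral_const_mul]
  exact integral_eq_sub_of_hasDerivAt (fun s _ => hasDerivAt_scaledPrimitive hz s)
    (((continuous_mul_rpow hz).const_mul _).intervalIntegrable a b)

lemma scaledPrimitive_strictMonoOn {z : ℝ} (hz : 0 < z) (hL : Real.log z ≠ 0) :
    StrictMonoOn (scaledPrimitive z) (Set.Ici 0) := by
  refine strictMonoOn_of_hasDerivWithinAt_pos (convex_Ici 0)
    (fun s _ => (hasDerivAt_scaledPrimitive hz s).continuousAt.continuousWithinAt)
    (fun s _ => (hasDerivAt_scaledPrimitive hz s).hasDerivWithinAt) fun s hs => ?_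
  rw [interior_Ici] at hs
  have : 0 < z ^ s := rpow_pos_of_pos hz s
  have : 0 < Real.log z ^ 2 := by positivity
  have : (0 : ℝ) < s := hs
  positivity

lemma Fcdf_eq {z : ℝ} (hz : 0 < z) (hL : Real.log z ≠ 0) (τ α x : ℝ) :
    Fcdf z τ α x = (scaledPrimitive z x - scaledPrimitive z τ)
      / (scaledPrimitive z α - scaledPrimitive z τ) := by
  rw [Fcdf, integral_mul_rpow hz hL, integral_mul_rpow hz hL,
    div_div_div_cancel_right₀ (pow_ne_zero 2 hL)]

lemma cInv_eq (z τ α y : ℝ) :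
    cInv z τ α y = (scaledPrimitive z α - scaledPrimitive z τ) * y + scaledPrimitive z τ := by
  simp only [cInv, scaledPrimitive]
  ring

lemma cInv_Fcdf {z : ℝ} (hz : 0 < z) (hL : Real.log z ≠ 0) {τ α : ℝ}
    (hτα : scaledPrimitive z τ ≠ scaledPrimitive z α) (x : ℝ) :
    cInv z τ α (Fcdf z τ α x) = scaledPrimitive z x := by
  rw [cInv_eq, Fcdf_eq hz hL, mul_div_cancel₀ _ (sub_ne_zero.mpr hτα.symm)]
  ring

lemma scaledPrimitive_div_exp_one {z : ℝ} (hz : 0 < z) (s : ℝ) :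
    scaledPrimitive z s / exp 1
      = (s * Real.log z - 1) * exp (s * Real.log z - 1) := by
  rw [scaledPrimitive, rpow_def_of_pos hz, exp_sub, mul_comm (Real.log z)]
  ring

lemma hasDerivAt_mul_exp (t : ℝ) : HasDerivAt (fun t => t * exp t) ((t + 1) * exp t) t := by
  refine ((hasDerivAt_id t).fun_mul (hasDerivAt_exp t)).congr_deriv ?_
  simp only [id]
  ring

lemma strictMonoOn_mul_exp : StrictMonoOn (fun t => t * exp t) (Set.Ici (-1)) := by
  refine strictMonoOn_of_hasDerivWithinAt_pos (convex_Ici _)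
    (fun t _ => (hasDerivAt_mul_exp t).continuousAt.continuousWithinAt)
    (fun t _ => (hasDerivAt_mul_exp t).hasDerivWithinAt) fun t ht => ?_
  rw [interior_Ici] at ht
  have : 0 < t + 1 := by linarith [ht.out]
  positivity

lemma strictAntiOn_mul_exp : StrictAntiOn (fun t => t * exp t) (Set.Iic (-1)) := by
  refine strictAntiOn_of_hasDerivWithinAt_neg (convex_Iic _)
    (fun t _ => (hasDerivAt_mul_exp t).continuousAt.continuousWithinAt)
    (fun t _ => (hasDerivAt_mul_exp t).hasDerivWithinAt) fun t ht => ?_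
  rw [interior_Iic] at ht
  have : t + 1 < 0 := by linarith [ht.out]
  exact mul_neg_of_neg_of_pos this (exp_pos t)

theorem stmt_16_general (z τ α : ℝ) (hz : 0 < z) (hz1 : z ≠ 1)
    (h0 : 0 ≤ τ) (h1 : τ < α)
    (x y w : ℝ) (hx : x ∈ Set.Ioo τ α) (hy : y = Fcdf z τ α x)
    (hw : w * Real.exp w = cInv z τ α y / Real.exp 1)
    (hbranch : (1 < z → -1 ≤ w) ∧ (z < 1 → w ≤ -1)) :
    x = (w + 1) / Real.log z := by
  have hL : Real.log z ≠ 0 := log_ne_zero_of_pos_of_ne_one hz hz1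
  have hgap : scaledPrimitive z τ ≠ scaledPrimitive z α :=
    (scaledPrimitive_strictMonoOn hz hL h0 (h0.trans h1.le) h1).ne
  have hsame : w * exp w = (x * Real.log z - 1) * exp (x * Real.log z - 1) := by
    rw [hw, hy, cInv_Fcdf hz hL hgap, scaledPrimitive_div_exp_one hz]
  have hxpos : 0 < x := h0.trans_lt hx.1
  suffices w = x * Real.log z - 1 by
    rw [this, eq_div_iff hL]
    ring
  rcases hz1.lt_or_gt with hlt | hgt
  · have hneg : x * Real.log z < 0 := mul_neg_of_pos_of_neg hxpos (log_neg hz hlt)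
    exact strictAntiOn_mul_exp.injOn (hbranch.2 hlt) (by simp only [Set.mem_Iic]; linarith) hsame
  · have hpos : 0 < x * Real.log z := mul_pos hxpos (log_pos hgt)
    exact strictMonoOn_mul_exp.injOn (hbranch.1 hgt) (by simp only [Set.mem_Ici]; linarith) hsame

/-- The inverse CDF is expressed via the Lambert W function: `w` is the value of the
appropriate real branch of the Lambert W function at `c(y)/e` (branch `W₀`, i.e. `w ≥ -1`,
when `z > 1`; branch `W₋₁`, i.e. `w ≤ -1`, when `z < 1`), characterized by `w * exp w = c(y)/e`. -/
theorem stmt_16 (z τ α : ℝ) (hz : 0 < z) (hz1 : z ≠ 1)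
    (h0 : 0 ≤ τ) (h1 : τ < α) (h2 : α ≤ 1)
    (x y w : ℝ) (hx : x ∈ Set.Ioo τ α) (hy : y = Fcdf z τ α x)
    (hw : w * Real.exp w = cInv z τ α y / Real.exp 1)
    (hbranch : (1 < z → -1 ≤ w) ∧ (z < 1 → w ≤ -1)) :
    x = (w + 1) / Real.log z :=
  stmt_16_general z τ α hz hz1 h0 h1 x y w hx hy hw hbranch
end

section
/- Let ψ(t) = (t^α − 1)/log(t^α) for t > 0, t ≠ 1 and ψ(1) = 1, with α ∈ (0, 1]. Then for y > 1, ψ^{-1}(y) = (−y W_{−1}(−(1/y) e^{−1/y}))^{1/α}, and for y ∈ (0, 1), ψ^{-1}(y) = (−y W_0(−(1/y) e^{−1/y}))^{1/α}, and ψ^{-1}(1) = 1. -/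
open Real

/-- ψ_mSt(t; α, 0): (t^α − 1)/log(t^α) for t ≠ 1, with ψ(1) = 1. -/
noncomputable def psiA (α t : ℝ) : ℝ :=
  if t = 1 then 1 else (t ^ α - 1) / Real.log (t ^ α)

/-
Put `s = -y w`. Multiplying `w e^w = -(1/y) e^{-1/y}` by `-y e^{-w}` gives `s = e^{-1/y - w}`,
so `log s = -1/y - w` and hence `s - 1 = y log s`. Since `(s^{1/α})^α = s`, this says
`ψ(s^{1/α}) = (s - 1)/log s = y`, as long as `s ≠ 1`. The other solution `w = -1/y` of the
Lambert equation is the one giving `s = 1`, and the branch conditions exclude it.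
-/

lemma psiA_rpow_inv_eq {α s y : ℝ} (hα : α ≠ 0) (hs : 0 < s) (hs1 : s ≠ 1)
    (h : s - 1 = y * log s) : psiA α (s ^ (1 / α)) = y := by
  have hpow : (s ^ (1 / α)) ^ α = s := by
    rw [← rpow_mul hs.le, one_div, inv_mul_cancel₀ hα, rpow_one]
  have hne : s ^ (1 / α) ≠ 1 := fun h1 => hs1 (by rw [← hpow, h1, one_rpow])
  have hlog : log s ≠ 0 := log_ne_zero_of_pos_of_ne_one hs hs1
  rw [psiA, if_neg hne, hpow, h, mul_div_cancel_right₀ y hlog]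

lemma neg_mul_eq_exp_of_mul_exp_eq {y w : ℝ} (hy : y ≠ 0)
    (hw : w * exp w = -(1 / y) * exp (-1 / y)) : -y * w = exp (-1 / y - w) := by
  calc -y * w = -y * (w * exp w) * exp (-w) := by rw [mul_assoc, mul_assoc, ← exp_add]; simp
    _ = exp (-1 / y - w) := by rw [hw, sub_eq_add_neg, exp_add]; field_simp

lemma neg_mul_ne_one_of_branch {y w : ℝ} (hy : 1 < y ∨ (0 < y ∧ y < 1))
    (hbr : (1 < y → w ≤ -1) ∧ (y < 1 → -1 ≤ w)) : -y * w ≠ 1 := by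
  rcases hy with hy | ⟨hy0, hy1⟩
  · nlinarith [hbr.1 hy]
  · nlinarith [hbr.2 hy1]

theorem stmt_17_general (α : ℝ) (hα : 0 < α) :
    (∀ y w : ℝ, (1 < y ∨ (0 < y ∧ y < 1)) →
      w * Real.exp w = -(1 / y) * Real.exp (-1 / y) →
      ((1 < y → w ≤ -1) ∧ (y < 1 → -1 ≤ w)) →
      psiA α ((-y * w) ^ (1 / α)) = y) ∧
    psiA α 1 = 1 := by
  refine ⟨fun y w hy hw hbr => ?_, if_pos rfl⟩
  have hy0 : y ≠ 0 := by rcases hy with hy | ⟨hy, -⟩ <;> positivity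
  have hs := neg_mul_eq_exp_of_mul_exp_eq hy0 hw
  refine psiA_rpow_inv_eq hα.ne' (hs ▸ exp_pos _) (neg_mul_ne_one_of_branch hy hbr) ?_
  rw [hs, log_exp, ← hs]
  field_simp
  ring

/-- The inverse Laplace exponent expressed via the Lambert W function: `w` is the value of the
appropriate real branch of W at `−(1/y)e^{−1/y}` (branch `W₋₁`, i.e. `w ≤ -1`, for `y > 1`;
branch `W₀`, i.e. `w ≥ -1`, for `y ∈ (0,1)`), characterized by `w * exp w = −(1/y)e^{−1/y}`.
Then ψ⁻¹(y) = (−y·w)^{1/α}; moreover ψ⁻¹(1) = 1. -/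
theorem stmt_17 (α : ℝ) (hα : 0 < α) (hα1 : α ≤ 1) :
    (∀ y w : ℝ, (1 < y ∨ (0 < y ∧ y < 1)) →
      w * Real.exp w = -(1 / y) * Real.exp (-1 / y) →
      ((1 < y → w ≤ -1) ∧ (y < 1 → -1 ≤ w)) →
      psiA α ((-y * w) ^ (1 / α)) = y) ∧
    psiA α 1 = 1 :=
  stmt_17_general α hα
end
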